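/- arXiv:1108.0129 — 6 statements merged into one kernel-verified Lean document; each statement's English description precedes it below -/
import Mathlib

section
/- Consider a finite tree T = (V,E) with positive edge weights μ_e and tree metric d, a finite state space R with r elements, a probability distribution π on R, and the Markov model in which a root state is drawn from π and the transition matrix M(e)_{xy} = π_x + (1−π_x)e^{−μ_e} if x = y, and π_y(1−e^{−μ_e}) otherwise, is applied independently along each edge directed away from the root. Let q_∞ = Σ_{x∈R} π_x² and p_∞ = 1 − q_∞. Then for any two leaves a, b: P[σ_a = σ_b] = q_∞ + p_∞·e^{−d(a,b)}; equivalently, E[p_∞^{−1}(1{σ_a = σ_b} − q_∞)] = e^{−d(a,b)}. -/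
open scoped Classical
open Real

noncomputable section

namespace RAS

variable {V : Type}

/-- The canonical path (as a walk) between two vertices of a tree. -/
def tpath (G : SimpleGraph V) [DecidableEq V] (hG : G.IsTree) (u v : V) : G.Walk u v :=
  ((Classical.choice (hG.isConnected.preconnected u v)).toPath : G.Path u v).1

/-- Tree metric: sum of edge weights along the path. -/
def tdist (G : SimpleGraph V) [DecidableEq V] (hG : G.IsTree) (w : Sym2 V → ℝ) (u v : V) : ℝ :=
  ((tpath G hG u v).edges.map w).sum

/-- Edges of the canonical path. -/
def pathEdges (G : SimpleGraph V) [DecidableEq V] (hG : G.IsTree) (u v : V) :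
    List (Sym2 V) :=
  (tpath G hG u v).edges

/-- A leaf is a vertex of degree 1. -/
def IsLeaf (G : SimpleGraph V) (v : V) : Prop := (G.neighborSet v).ncard = 1

/-- A symmetric edge factor depending on whether the endpoint states agree. -/
def agreeIf {α : Type} (σ : V → α) (A B : ℝ) : Sym2 V → ℝ :=
  Sym2.lift ⟨fun u v => if σ u = σ v then A else B, fun u v => by
    simp only []
    by_cases h : σ u = σ v
    · rw [if_pos h, if_pos h.symm]
    · rw [if_neg h, if_neg (fun hh => h hh.symm)]⟩

/-- Probability mass function of the `r`-state Poisson model on a weighted tree. -/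
def poissonPMF (G : SimpleGraph V) [Fintype V] [DecidableEq V]
    (w : Sym2 V → ℝ) (r : ℕ) (σ : V → Fin r) : ℝ :=
  (r : ℝ)⁻¹ * ∏ e ∈ (Set.toFinite G.edgeSet).toFinset,
      agreeIf σ ((r : ℝ)⁻¹ + (1 - (r : ℝ)⁻¹) * exp (-(w e)))
        ((r : ℝ)⁻¹ * (1 - exp (-(w e)))) e

/-- Probability of an event under a pmf on a finite configuration space. -/
def fprob {Ω : Type} [Fintype Ω] (p : Ω → ℝ) (A : Set Ω) : ℝ :=
  ∑ ω : Ω, if ω ∈ A then p ω else 0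

end RAS

namespace RAS

variable {V : Type}

/-- The parent of `v` when the tree is rooted at `ρ`: the next vertex on the
path from `v` to `ρ` (equal to `v` itself when `v = ρ`). -/
def parent (G : SimpleGraph V) [DecidableEq V] (hG : G.IsTree) (ρ v : V) : V :=
  (tpath G hG v ρ).getVert 1

/-- Probability mass function of the Markov model on a weighted tree with root
distribution `pp` and transition matrices `M(e)_{xy} = pp_x + (1-pp_x)e^{-μ_e}`
(if `x = y`) and `pp_y (1-e^{-μ_e})` (otherwise), applied along the edges
directed away from the root `ρ`. -/
def rootedPMF {R : Type} [Fintype R] (G : SimpleGraph V) [Fintype V] [DecidableEq V]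
    (hG : G.IsTree) (w : Sym2 V → ℝ) (pp : R → ℝ) (ρ : V) (σ : V → R) : ℝ :=
  pp (σ ρ) * ∏ v ∈ Finset.univ.erase ρ,
    (if σ v = σ (parent G hG ρ v)
      then pp (σ v) + (1 - pp (σ v)) * exp (-(w s(parent G hG ρ v, v)))
      else pp (σ v) * (1 - exp (-(w s(parent G hG ρ v, v)))))

end RAS

/-!
The transition matrices are reversible, `π_x M_xy = π_y M_yx`, and form a semigroup,
`M(μ) M(ν) = M(μ + ν)`. Reversibility makes the law independent of the root, so we may root the
tree at `b`. Summing out the vertices off the path from `a` to `b`, a leaf at a time, only uses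
that the rows of `M` sum to one; collapsing the path with the semigroup law then gives
`P[σ_b = x, σ_a = y] = π_x M(d(a,b))_xy`, and the diagonal of this sums to
`q_∞ + p_∞ e^{-d(a,b)}`.

All sums run over every configuration `V → R`, so summing out a coordinate on which the summand
no longer depends produces a factor `|R|`; these factors are carried along and cancelled at the end.
-/

namespace RAS

open SimpleGraph

section Configurations

variable {V R : Type} [Fintype V] [DecidableEq V] [Fintype R]

theorem sum_sum_eq_card_mul_sum_eval (v : V) (F : (V → R) → R → ℝ)
    (hF : ∀ σ x, F (Function.update σ v x) = F σ) :
    ∑ σ, ∑ y, F σ y = Fintype.card R * ∑ σ, F σ (σ v) := by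
  let φ : (V → R) × R → (V → R) × R := fun p => (Function.update p.1 v p.2, p.1 v)
  have hφ : Function.Involutive φ := fun p => by simp [φ]
  calc ∑ σ, ∑ y, F σ y = ∑ p : (V → R) × R, F (φ p).1 ((φ p).1 v) := by
        rw [Fintype.sum_prod_type]; simp [φ, hF]
    _ = ∑ p : (V → R) × R, F p.1 (p.1 v) :=
        Equiv.sum_comp (hφ.toPerm _) fun p => F p.1 (p.1 v)
    _ = _ := by rw [Fintype.sum_prod_type]; simp [Finset.mul_sum]

theorem sum_comp_eval (v : V) (H : R → ℝ) :
    ∑ σ : V → R, H (σ v) = Fintype.card R ^ (Fintype.card V - 1) * ∑ x, H x := by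
  refine (Finset.sum_fiberwise' Finset.univ (fun σ : V → R => σ v) H).symm.trans ?_
  rw [Finset.mul_sum]
  refine Finset.sum_congr rfl fun x _ => ?_
  rw [Finset.sum_const, nsmul_eq_mul]
  have := Fintype.card_filter_piFinset_const_eq_of_mem (Finset.univ : Finset R) v
    (Finset.mem_univ x)
  simp only [Fintype.piFinset_univ, Finset.card_univ] at this
  rw [this, Nat.cast_pow]

end Configurations

section Transition

variable {R : Type} (pp : R → ℝ)

-- The matrix `M(e)` of an edge of length `μ_e = μ`.
def transition (μ : ℝ) (x y : R) : ℝ :=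
  if y = x then pp y + (1 - pp y) * exp (-μ) else pp y * (1 - exp (-μ))

variable {pp}

theorem transition_apply (μ : ℝ) (x y : R) :
    transition pp μ x y = exp (-μ) * (if y = x then 1 else 0) + (1 - exp (-μ)) * pp y := by
  rcases eq_or_ne y x with rfl | h <;> simp [transition, *] <;> ring

theorem transition_zero (x y : R) : transition pp 0 x y = if y = x then 1 else 0 := by
  simp [transition_apply]

theorem mul_transition_comm (μ : ℝ) (x y : R) :
    pp x * transition pp μ x y = pp y * transition pp μ y x := by
  rcases eq_or_ne x y with rfl | h
  · rfl
  · simp [transition_apply, h, h.symm]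
    ring

variable [Fintype R]

theorem sum_transition_apply (hpp : ∑ x, pp x = 1) (μ : ℝ) (x : R) :
    ∑ y, transition pp μ x y = 1 := by
  simp [transition_apply, Finset.sum_add_distrib, ← Finset.mul_sum, hpp]

theorem sum_transition_mul_transition (hpp : ∑ x, pp x = 1) (μ ν : ℝ) (x z : R) :
    ∑ y, transition pp μ x y * transition pp ν y z = transition pp (μ + ν) x z := by
  simp only [transition_apply, add_mul, mul_add, Finset.sum_add_distrib]
  simp [← Finset.mul_sum, ← Finset.sum_mul, hpp, ite_mul, Real.exp_add]
  split_ifs <;> ring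

theorem sum_mul_transition_apply_self (hpp : ∑ x, pp x = 1) (μ : ℝ) :
    ∑ x, pp x * transition pp μ x x = ∑ x, pp x ^ 2 + (1 - ∑ x, pp x ^ 2) * exp (-μ) := by
  have h x : pp x * transition pp μ x x = exp (-μ) * pp x + (1 - exp (-μ)) * pp x ^ 2 := by
    simp [transition_apply]
    ring
  simp only [h, Finset.sum_add_distrib, ← Finset.mul_sum, hpp]
  ring

end Transition

section Marginal

variable {V R : Type} [Fintype V] [DecidableEq V] [Fintype R]

def transitionProd (p : V → V) (k : V → R → R → ℝ) (S : Finset V) (σ : V → R) : ℝ :=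
  ∏ u ∈ S, k u (σ (p u)) (σ u)

theorem card_mul_sum_mul_transitionProd_insert {p : V → V} {k : V → R → R → ℝ}
    {S : Finset V} {v : V} (hvS : v ∉ S) (hpv : p v ≠ v) (hpS : ∀ u ∈ S, p u ≠ v)
    (hk : ∀ x, ∑ y, k v x y = 1) (g : (V → R) → ℝ)
    (hg : ∀ σ x, g (Function.update σ v x) = g σ) :
    Fintype.card R * ∑ σ, g σ * transitionProd p k (insert v S) σ =
      ∑ σ, g σ * transitionProd p k S σ := by
  have hS : ∀ σ x, transitionProd p k S (Function.update σ v x) = transitionProd p k S σ :=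
    fun σ x => Finset.prod_congr rfl fun u hu => by
      rw [Function.update_of_ne (hpS u hu), Function.update_of_ne (ne_of_mem_of_not_mem hu hvS)]
  let F : (V → R) → R → ℝ := fun σ y => g σ * transitionProd p k S σ * k v (σ (p v)) y
  calc Fintype.card R * ∑ σ, g σ * transitionProd p k (insert v S) σ
      = Fintype.card R * ∑ σ, F σ (σ v) := by
        simp only [F, transitionProd, Finset.prod_insert hvS]
        congr 1
        exact Finset.sum_congr rfl fun σ _ => by ring
    _ = ∑ σ, ∑ y, F σ y :=
        (sum_sum_eq_card_mul_sum_eval v F fun σ x => by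
          simp only [F, hg, hS, Function.update_of_ne hpv]).symm
    _ = ∑ σ, g σ * transitionProd p k S σ := by
        simp only [F, ← Finset.mul_sum, hk, mul_one]

theorem card_pow_mul_sum_mul_transitionProd_union {p : V → V} (D : V → ℕ)
    {k : V → R → R → ℝ} (g : (V → R) → ℝ) (S t : Finset V) (hdisj : Disjoint S t)
    (hclosed : ∀ u ∈ S ∪ t, p u ∈ t → u ∈ t) (hD : ∀ v ∈ t, D (p v) < D v)
    (hk : ∀ v ∈ t, ∀ x, ∑ y, k v x y = 1)
    (hg : ∀ v ∈ t, ∀ σ x, g (Function.update σ v x) = g σ) :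
    Fintype.card R ^ t.card * ∑ σ, g σ * transitionProd p k (S ∪ t) σ =
      ∑ σ, g σ * transitionProd p k S σ := by
  induction t using Finset.strongInduction generalizing S with
  | H t ih =>
  rcases t.eq_empty_or_nonempty with rfl | ht
  · simp
  -- Take `v ∈ t` minimising `D`, so that `t.erase v` is still closed under children.
  obtain ⟨v, hvt, hmin⟩ := t.exists_min_image D ht
  have hvS : v ∉ S := Finset.disjoint_right.1 hdisj hvt
  have hpS : ∀ u ∈ S, p u ≠ v := fun u hu hpu =>
    Finset.disjoint_left.1 hdisj hu (hclosed u (Finset.mem_union_left _ hu) (hpu ▸ hvt))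
  have hunion : insert v S ∪ t.erase v = S ∪ t := by
    rw [Finset.insert_union, ← Finset.union_insert, Finset.insert_erase hvt]
  have ih' := ih (t.erase v) (Finset.erase_ssubset hvt) (insert v S)
    (by simpa [Finset.disjoint_insert_left] using hdisj.mono_right (Finset.erase_subset v t))
    (fun u hu hpu => by
      rw [hunion] at hu
      refine Finset.mem_erase.2 ⟨?_, hclosed u hu (Finset.mem_of_mem_erase hpu)⟩
      rintro rfl
      exact (hmin _ (Finset.mem_of_mem_erase hpu)).not_gt (hD u hvt))
    (fun u hu => hD u (Finset.mem_of_mem_erase hu)) (fun u hu => hk u (Finset.mem_of_mem_erase hu))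
    (fun u hu => hg u (Finset.mem_of_mem_erase hu))
  rw [hunion] at ih'
  rw [← Finset.card_erase_add_one hvt, pow_succ', mul_assoc, ih']
  exact card_mul_sum_mul_transitionProd_insert hvS (fun h => (hD v hvt).ne (by rw [h]))
    hpS (hk v hvt) g (hg v hvt)

end Marginal

section Walk

variable {V : Type} {G : SimpleGraph V}

theorem nodup_map_fst_darts {u a : V} {q : G.Walk u a} (hq : q.IsPath) :
    (q.darts.map (·.fst)).Nodup := by
  rw [Walk.map_fst_darts]
  exact hq.support_nodup.sublist (List.dropLast_sublist _)

theorem end_notMem_map_fst_darts {u a : V} {q : G.Walk u a} (hq : q.IsPath) :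
    a ∉ q.darts.map (·.fst) := by
  have := hq.support_nodup
  rw [← Walk.map_fst_darts_append] at this
  exact fun ha => List.disjoint_of_nodup_append this ha (List.mem_singleton_self a)

end Walk

section Path

variable {V R : Type} [Fintype V] [DecidableEq V] [Fintype R] {G : SimpleGraph V}

theorem card_pow_mul_sum_mul_prod_darts {pp : R → ℝ} (hpp : ∑ x, pp x = 1)
    (μ : Sym2 V → ℝ) {u a : V} (q : G.Walk u a) (hq : q.IsPath) (F : R → R → ℝ) :
    Fintype.card R ^ q.length * ∑ σ : V → R, F (σ a) (σ u) *
        (q.darts.map fun d => transition pp (μ d.edge) (σ d.snd) (σ d.fst)).prod =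
      ∑ σ : V → R, ∑ y, F (σ a) y * transition pp (q.edges.map μ).sum (σ a) y := by
  induction q generalizing F with
  | nil => simp [transition_zero]
  | @cons u v a h q ih =>
    rw [Walk.cons_isPath_iff] at hq
    have hu : ∀ x ∈ q.support, x ≠ u := fun x hx hxu => hq.2 (hxu ▸ hx)
    let P : (V → R) → ℝ := fun σ =>
      (q.darts.map fun d => transition pp (μ d.edge) (σ d.snd) (σ d.fst)).prod
    have hP : ∀ σ x, P (Function.update σ u x) = P σ := fun σ x => by
      simp only [P]
      congr 1
      refine List.map_congr_left fun d hd => ?_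
      rw [Function.update_of_ne (hu _ (q.dart_snd_mem_support_of_mem_darts hd)),
        Function.update_of_ne (hu _ (q.dart_fst_mem_support_of_mem_darts hd))]
    let E : (V → R) → R → ℝ := fun σ y =>
      F (σ a) y * transition pp (μ s(u, v)) (σ v) y * P σ
    have hE : ∀ σ x, E (Function.update σ u x) = E σ := fun σ x => by
      simp only [E, hP, Function.update_of_ne (hu _ q.end_mem_support),
        Function.update_of_ne (hu _ q.start_mem_support)]
    calc Fintype.card R ^ (q.length + 1) * ∑ σ : V → R, F (σ a) (σ u) *
          (transition pp (μ s(u, v)) (σ v) (σ u) * P σ)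
        = Fintype.card R ^ q.length * (Fintype.card R * ∑ σ, E σ (σ u)) := by
          simp only [E, pow_succ, mul_assoc]
      _ = Fintype.card R ^ q.length * ∑ σ : V → R,
            (fun z x => ∑ y, F z y * transition pp (μ s(u, v)) x y) (σ a) (σ v) * P σ := by
          rw [← sum_sum_eq_card_mul_sum_eval u E hE]
          simp only [E, Finset.sum_mul]
      _ = _ := by
          refine (ih hq.1 fun z x => ∑ y, F z y * transition pp (μ s(u, v)) x y).trans ?_
          refine Finset.sum_congr rfl fun σ _ => ?_
          simp only [Finset.sum_mul, Walk.edges_cons, List.map_cons, List.sum_cons]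
          rw [Finset.sum_comm]
          refine Finset.sum_congr rfl fun y _ => ?_
          rw [add_comm, ← sum_transition_mul_transition hpp, Finset.mul_sum]
          exact Finset.sum_congr rfl fun x _ => by ring

end Path

section Tree

variable {V : Type} [DecidableEq V] {G : SimpleGraph V} (hG : G.IsTree)

theorem tpath_isPath (u v : V) : (tpath G hG u v).IsPath :=
  (Classical.choice (hG.connected.preconnected u v)).toPath.2

theorem tpath_eq {u v : V} (q : G.Walk u v) (hq : q.IsPath) : tpath G hG u v = q :=
  congrArg Subtype.val
    ((hG.isAcyclic.subsingleton_path u v).elim ⟨_, tpath_isPath hG u v⟩ ⟨q, hq⟩)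

theorem tpath_self (u : V) : tpath G hG u u = .nil :=
  tpath_eq hG _ .nil

theorem support_tpath_subset {u v : V} (q : G.Walk u v) :
    (tpath G hG u v).support ⊆ q.support := by
  rw [tpath_eq hG q.bypass q.bypass_isPath]
  exact q.support_bypass_subset_support

theorem parent_self (ρ : V) : parent G hG ρ ρ = ρ := by
  rw [parent, tpath_self]
  rfl

theorem parent_eq_of_adj {ρ u v : V} (h : G.Adj v u) (hv : v ∉ (tpath G hG u ρ).support) :
    parent G hG ρ v = u := by
  rw [parent, tpath_eq hG (.cons h (tpath G hG u ρ)) (Walk.IsPath.cons (tpath_isPath hG u ρ) hv),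
    Walk.getVert_cons_succ, Walk.getVert_zero]

theorem tpath_eq_cons_parent {ρ v : V} (h : v ≠ ρ) :
    ∃ hadj : G.Adj v (parent G hG ρ v),
      tpath G hG v ρ = .cons hadj (tpath G hG (parent G hG ρ v) ρ) ∧
        v ∉ (tpath G hG (parent G hG ρ v) ρ).support := by
  obtain ⟨u, hadj, q, hq⟩ := Walk.exists_eq_cons_of_ne h (tpath G hG v ρ)
  have hpath := tpath_isPath hG v ρ
  rw [hq, Walk.cons_isPath_iff] at hpath
  have hu : parent G hG ρ v = u := by
    rw [parent, hq, Walk.getVert_cons_succ, Walk.getVert_zero]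
  subst hu
  rw [tpath_eq hG q hpath.1]
  exact ⟨hadj, hq, hpath.2⟩

theorem length_tpath_parent_lt {ρ v : V} (h : v ≠ ρ) :
    (tpath G hG (parent G hG ρ v) ρ).length < (tpath G hG v ρ).length := by
  obtain ⟨hadj, heq, -⟩ := tpath_eq_cons_parent hG h
  rw [heq, Walk.length_cons]
  exact Nat.lt_succ_self _

theorem parent_eq_parent_of_adj {x y v : V} (hxy : G.Adj x y) (hvx : v ≠ x) (hvy : v ≠ y) :
    parent G hG x v = parent G hG y v := by
  obtain ⟨hadj, -, hv⟩ := tpath_eq_cons_parent hG hvy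
  refine parent_eq_of_adj hG hadj fun hmem => ?_
  have := support_tpath_subset hG ((tpath G hG (parent G hG y v) y).concat hxy.symm) hmem
  rw [Walk.support_concat, List.mem_append, List.mem_singleton] at this
  exact this.elim hv hvx

theorem parent_dart_fst {ρ u : V} {q : G.Walk u ρ} (hq : q.IsPath) {d : G.Dart}
    (hd : d ∈ q.darts) : parent G hG ρ d.fst = d.snd := by
  induction q with
  | nil => simp at hd
  | cons h q ih =>
    rw [Walk.cons_isPath_iff] at hq
    rw [Walk.darts_cons, List.mem_cons] at hd
    rcases hd with rfl | hd
    · exact parent_eq_of_adj hG h (tpath_eq hG _ hq.1 ▸ hq.2)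
    · exact ih hq.1 hd

theorem parent_mem_map_fst_darts {ρ u v : V} {q : G.Walk u ρ} (hq : q.IsPath)
    (hv : v ∈ q.darts.map (·.fst)) :
    parent G hG ρ v ∈ q.darts.map (·.fst) ∨ parent G hG ρ v = ρ := by
  obtain ⟨d, hd, rfl⟩ := List.mem_map.1 hv
  rw [parent_dart_fst hG hq hd, ← List.mem_singleton, ← List.mem_append,
    Walk.map_fst_darts_append]
  exact q.dart_snd_mem_support_of_mem_darts hd

theorem transitionProd_toFinset_map_fst_darts {R : Type} (w : Sym2 V → ℝ) (pp : R → ℝ)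
    {ρ u : V} {q : G.Walk u ρ} (hq : q.IsPath) (σ : V → R) :
    transitionProd (parent G hG ρ) (fun v => transition pp (w s(parent G hG ρ v, v)))
        (q.darts.map (·.fst)).toFinset σ =
      (q.darts.map fun d => transition pp (w d.edge) (σ d.snd) (σ d.fst)).prod := by
  rw [transitionProd, List.prod_toFinset _ (nodup_map_fst_darts hq), List.map_map]
  refine congrArg List.prod (List.map_congr_left fun d hd => ?_)
  simp only [Function.comp, parent_dart_fst hG hq hd, Dart.edge, Sym2.eq_swap]

end Tree

section Model

variable {V R : Type} [Fintype V] [DecidableEq V] [Fintype R] {G : SimpleGraph V}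
  (hG : G.IsTree) (w : Sym2 V → ℝ) (pp : R → ℝ)

theorem rootedPMF_apply (ρ : V) (σ : V → R) :
    rootedPMF G hG w pp ρ σ = pp (σ ρ) * transitionProd (parent G hG ρ)
      (fun v => transition pp (w s(parent G hG ρ v, v))) (Finset.univ.erase ρ) σ :=
  rfl

theorem rootedPMF_eq_of_adj {x y : V} (hxy : G.Adj x y) :
    rootedPMF G hG w pp x = rootedPMF G hG w pp y := by
  funext σ
  have hpx : parent G hG x y = x := parent_eq_of_adj hG hxy.symm (by simp [tpath_self, hxy.ne'])
  have hpy : parent G hG y x = y := parent_eq_of_adj hG hxy (by simp [tpath_self, hxy.ne])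
  simp only [rootedPMF_apply, transitionProd]
  rw [← Finset.mul_prod_erase _ _ (Finset.mem_erase.2 ⟨hxy.ne', Finset.mem_univ y⟩),
    ← Finset.mul_prod_erase _ _ (Finset.mem_erase.2 ⟨hxy.ne, Finset.mem_univ x⟩),
    ← mul_assoc, ← mul_assoc, Finset.erase_right_comm, hpx, hpy, Sym2.eq_swap,
    mul_transition_comm]
  congr 1
  refine Finset.prod_congr rfl fun v hv => ?_
  obtain ⟨hvx, hv⟩ := Finset.mem_erase.1 hv
  rw [parent_eq_parent_of_adj hG hxy hvx (Finset.ne_of_mem_erase hv)]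

theorem rootedPMF_independent_of_root (x y : V) :
    rootedPMF G hG w pp x = rootedPMF G hG w pp y := by
  obtain ⟨q⟩ := hG.connected.preconnected x y
  induction q with
  | nil => rfl
  | cons h _ ih => exact (rootedPMF_eq_of_adj hG w pp h).trans ih

end Model

section JointLaw

variable {V R : Type} [Fintype V] [DecidableEq V] [Fintype R] {G : SimpleGraph V}
  (hG : G.IsTree) (w : Sym2 V → ℝ) {pp : R → ℝ}

theorem card_pow_mul_sum_mul_transitionProd_erase (hpp : ∑ x, pp x = 1) {ρ u : V}
    {q : G.Walk u ρ} (hq : q.IsPath) (g : (V → R) → ℝ)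
    (hg : ∀ v ∉ q.support, ∀ σ x, g (Function.update σ v x) = g σ) :
    Fintype.card R ^ (Fintype.card V - 1) * ∑ σ, g σ * transitionProd (parent G hG ρ)
        (fun v => transition pp (w s(parent G hG ρ v, v))) (Finset.univ.erase ρ) σ =
      Fintype.card R ^ q.length *
        ∑ σ, g σ *
          (q.darts.map fun d => transition pp (w d.edge) (σ d.snd) (σ d.fst)).prod := by
  set S := (q.darts.map (·.fst)).toFinset
  set t := Finset.univ.erase ρ \ S
  have hsupp : ∀ v ∈ q.support, v ∈ S ∨ v = ρ := fun v hv => by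
    rwa [← Walk.map_fst_darts_append, List.mem_append, List.mem_singleton,
      ← List.mem_toFinset] at hv
  have hmem_t : ∀ v ∈ t, v ∉ S ∧ v ≠ ρ := fun v hv => by
    simp only [t, Finset.mem_sdiff, Finset.mem_erase] at hv
    exact ⟨hv.2, hv.1.1⟩
  have hSt : S ∪ t = Finset.univ.erase ρ :=
    Finset.union_sdiff_of_subset fun v hv => Finset.mem_erase.2
      ⟨ne_of_mem_of_not_mem hv (mt List.mem_toFinset.1 (end_notMem_map_fst_darts hq)),
        Finset.mem_univ v⟩
  have hcard : Fintype.card V - 1 = q.length + t.card := by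
    rw [← Finset.card_univ, ← Finset.card_erase_of_mem (Finset.mem_univ ρ), ← hSt,
      Finset.card_union_of_disjoint Finset.disjoint_sdiff,
      List.toFinset_card_of_nodup (nodup_map_fst_darts hq), List.length_map, Walk.length_darts]
  rw [hcard, pow_add, mul_assoc, ← hSt,
    card_pow_mul_sum_mul_transitionProd_union (fun v => (tpath G hG v ρ).length) g S t
      Finset.disjoint_sdiff
      (fun v hv hpv => (Finset.mem_union.1 hv).resolve_left fun hvS =>
        (parent_mem_map_fst_darts hG hq (List.mem_toFinset.1 hvS)).elim
          (fun h => (hmem_t _ hpv).1 (List.mem_toFinset.2 h)) (hmem_t _ hpv).2)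
      (fun v hv => length_tpath_parent_lt hG (hmem_t v hv).2)
      (fun v _ => sum_transition_apply hpp _)
      (fun v hv => hg v fun hv' => (hsupp v hv').elim (hmem_t v hv).1 (hmem_t v hv).2)]
  simp only [S, transitionProd_toFinset_map_fst_darts hG w pp hq]

theorem sum_mul_rootedPMF (hpp : ∑ x, pp x = 1) (ρ u : V) (F : R → R → ℝ) :
    ∑ σ, F (σ ρ) (σ u) * rootedPMF G hG w pp ρ σ =
      ∑ x, ∑ y, pp x * transition pp (tdist G hG w u ρ) x y * F x y := by
  have : Nonempty R := by
    by_contra h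
    simp [not_nonempty_iff.1 h] at hpp
  have hq := tpath_isPath hG u ρ
  refine mul_left_cancel₀ (pow_ne_zero (Fintype.card V - 1) (Nat.cast_ne_zero.2
    (Fintype.card_ne_zero (α := R)))) ?_
  calc Fintype.card R ^ (Fintype.card V - 1) * ∑ σ, F (σ ρ) (σ u) * rootedPMF G hG w pp ρ σ
      = Fintype.card R ^ (tpath G hG u ρ).length * ∑ σ : V → R,
          (fun z y => pp z * F z y) (σ ρ) (σ u) * ((tpath G hG u ρ).darts.map
            fun d => transition pp (w d.edge) (σ d.snd) (σ d.fst)).prod := by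
        rw [← card_pow_mul_sum_mul_transitionProd_erase hG w hpp hq _ fun v hv σ x => by
          rw [Function.update_of_ne (ne_of_mem_of_not_mem (tpath G hG u ρ).end_mem_support hv),
            Function.update_of_ne (ne_of_mem_of_not_mem (tpath G hG u ρ).start_mem_support hv)]]
        simp only [rootedPMF_apply, mul_left_comm, mul_assoc]
    _ = ∑ σ : V → R, ∑ y,
          pp (σ ρ) * F (σ ρ) y * transition pp (tdist G hG w u ρ) (σ ρ) y :=
        card_pow_mul_sum_mul_prod_darts hpp w _ hq fun z y => pp z * F z y
    _ = _ := by
        rw [← sum_comp_eval ρ]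
        exact Finset.sum_congr rfl fun σ _ => Finset.sum_congr rfl fun y _ => by ring

end JointLaw

end RAS

theorem agreement_probability_general
    {V : Type} [Fintype V] [DecidableEq V] (G : SimpleGraph V) (hG : G.IsTree)
    (w : Sym2 V → ℝ)
    {R : Type} [Fintype R]
    (pp : R → ℝ) (hppsum : ∑ x : R, pp x = 1)
    (ρ : V) (a b : V) :
    RAS.fprob (RAS.rootedPMF G hG w pp ρ) {σ : V → R | σ a = σ b} =
      (∑ x : R, (pp x) ^ 2) +
        (1 - ∑ x : R, (pp x) ^ 2) * Real.exp (-(RAS.tdist G hG w a b)) := by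
  have hjoint := RAS.sum_mul_rootedPMF hG w hppsum b a fun x y => if y = x then 1 else 0
  simp only [mul_ite, mul_one, mul_zero, Finset.sum_ite_eq', Finset.mem_univ, if_true] at hjoint
  rw [RAS.sum_mul_transition_apply_self hppsum,
    ← RAS.rootedPMF_independent_of_root hG w pp ρ b] at hjoint
  rw [← hjoint, RAS.fprob]
  simp only [Set.mem_ofPred_eq, ite_mul, one_mul, zero_mul]

/-- On a finite weighted tree carrying the Markov model with
root distribution `pp` and the transition matrices `M(e)` applied along edges
directed away from the root, for any two leaves `a, b` one has
`P[σ_a = σ_b] = q_∞ + p_∞ e^{-d(a,b)}`, where `q_∞ = Σ_x pp_x²`, `p_∞ = 1 - q_∞`. -/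
theorem agreement_probability
    {V : Type} [Fintype V] [DecidableEq V] (G : SimpleGraph V) (hG : G.IsTree)
    (w : Sym2 V → ℝ) (hw : ∀ e ∈ G.edgeSet, 0 < w e)
    {R : Type} [Fintype R] (r : ℕ) (hR : Fintype.card R = r)
    (pp : R → ℝ) (hpp : ∀ x, 0 ≤ pp x) (hppsum : ∑ x : R, pp x = 1)
    (ρ : V) (a b : V) (ha : RAS.IsLeaf G a) (hb : RAS.IsLeaf G b) :
    RAS.fprob (RAS.rootedPMF G hG w pp ρ) {σ : V → R | σ a = σ b} =
      (∑ x : R, (pp x) ^ 2) +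
        (1 - ∑ x : R, (pp x) ^ 2) * Real.exp (-(RAS.tdist G hG w a b)) :=
  agreement_probability_general G hG w pp hppsum ρ a b
end
end

section
/- Let 0 < f and M > 0, let Υ be a nonempty finite set of pairs (a,b) with associated real values d(a,b) satisfying 2f ≤ d(a,b) ≤ M, and define u(λ) = |Υ|^{−1} Σ_{(a,b)∈Υ} e^{−λ·d(a,b)} for λ ≥ 0. If λ, λ' ≥ 0 and λ − λ' ≥ β for some β ≥ 0, then u(λ') − u(λ) ≥ e^{−λM}·(e^{2fβ} − 1). -/
open Real

/-! Each term gains at least the factor `exp (2 f β) - 1`: write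
`exp (-(λ' x)) - exp (-(λ x)) = exp (-(λ x)) * (exp ((λ - λ') x) - 1)` and bound the first factor
below using `x ≤ M`, the second using `(λ - λ') x ≥ β · 2f`. Averaging over `Υ` preserves the
pointwise bound. -/

lemma exp_neg_mul_sub_exp_neg_mul_eq (lam lam' x : ℝ) :
    exp (-(lam' * x)) - exp (-(lam * x)) = exp (-(lam * x)) * (exp ((lam - lam') * x) - 1) := by
  rw [mul_sub, ← exp_add]
  ring_nf

lemma exp_neg_mul_mul_exp_sub_one_le_exp_neg_mul_sub {lam lam' β c x M : ℝ} (hlam : 0 ≤ lam)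
    (hβ : 0 ≤ β) (hsep : β ≤ lam - lam') (hc : 0 ≤ c) (hcx : c ≤ x) (hxM : x ≤ M) :
    exp (-(lam * M)) * (exp (c * β) - 1) ≤ exp (-(lam' * x)) - exp (-(lam * x)) := by
  have hx : 0 ≤ x := hc.trans hcx
  have hgap : c * β ≤ (lam - lam') * x :=
    calc c * β ≤ x * β := by gcongr
      _ = β * x := mul_comm x β
      _ ≤ (lam - lam') * x := by gcongr
  have hexp : 0 ≤ exp (c * β) - 1 := sub_nonneg.mpr (one_le_exp (mul_nonneg hc hβ))
  rw [exp_neg_mul_sub_exp_neg_mul_eq]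
  gcongr

theorem cluster_mean_separation_general {ι : Type*} (Υ : Finset ι) (hne : Υ.Nonempty)
    (d : ι → ℝ) (f M : ℝ) (hf : 0 < f)
    (hd : ∀ i ∈ Υ, 2 * f ≤ d i ∧ d i ≤ M)
    (lam lam' β : ℝ) (hlam : 0 ≤ lam)
    (hβ : 0 ≤ β) (hsep : β ≤ lam - lam') :
    exp (-(lam * M)) * (exp (2 * f * β) - 1) ≤
      (Υ.card : ℝ)⁻¹ * ∑ i ∈ Υ, exp (-(lam' * d i)) -
        (Υ.card : ℝ)⁻¹ * ∑ i ∈ Υ, exp (-(lam * d i)) := by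
  simp only [inv_mul_eq_div, ← Finset.expect_eq_sum_div_card, ← Finset.expect_sub_distrib]
  exact Finset.le_expect hne fun i hi ↦
    exp_neg_mul_mul_exp_sub_one_le_exp_neg_mul_sub hlam hβ hsep (by positivity) (hd i hi).1
      (hd i hi).2

/-- **Separation.** Let `Υ` be a nonempty finite set of pairs
with associated values `d(a,b) ∈ [2f, M]` and let
`u(λ) = |Υ|⁻¹ Σ_{(a,b)∈Υ} e^{-λ d(a,b)}`.  If `λ, λ' ≥ 0` and `λ - λ' ≥ β ≥ 0`
then `u(λ') - u(λ) ≥ e^{-λM} (e^{2fβ} - 1)`. -/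
theorem cluster_mean_separation {ι : Type*} (Υ : Finset ι) (hne : Υ.Nonempty)
    (d : ι → ℝ) (f M : ℝ) (hf : 0 < f) (hM : 0 < M)
    (hd : ∀ i ∈ Υ, 2 * f ≤ d i ∧ d i ≤ M)
    (lam lam' β : ℝ) (hlam : 0 ≤ lam) (hlam' : 0 ≤ lam')
    (hβ : 0 ≤ β) (hsep : β ≤ lam - lam') :
    exp (-(lam * M)) * (exp (2 * f * β) - 1) ≤
      (Υ.card : ℝ)⁻¹ * ∑ i ∈ Υ, exp (-(lam' * d i)) -
        (Υ.card : ℝ)⁻¹ * ∑ i ∈ Υ, exp (-(lam * d i)) :=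
  cluster_mean_separation_general Υ hne d f M hf hd lam lam' β hlam hβ hsep
end

section
/- Let g > 0 and M > 0, and let Λ be a nonnegative real random variable with E[Λ] = 1 and E[e^{−MΛ}] ≤ e^{−6g}. Then P[ λ̲ ≤ Λ ≤ λ̄ ] ≥ χ, where λ̲ = g/M, λ̄ = 2/(1 − e^{−5g}), and χ = (1 − e^{−5g})/2. -/
open Real MeasureTheory ProbabilityTheory

/-!
The event fails only if `Λ < g/M` or `Λ > λ̄`. The Chernoff bound
`P[Λ ≤ g/M] ≤ e^{M · g/M} E[e^{-MΛ}] ≤ e^{g - 6g}` makes the first event have probability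
at most `e^{-5g}`, and Markov's inequality bounds the second by `1/λ̄ = χ`.
Hence the event has probability at least `1 - e^{-5g} - χ = χ`.
-/

section

variable {Ω : Type*} {m : MeasurableSpace Ω} {μ : Measure Ω}

theorem one_sub_le_measureReal_of_compl_subset_union [IsProbabilityMeasure μ] {s t u : Set Ω}
    (h : sᶜ ⊆ t ∪ u) : 1 - (μ.real t + μ.real u) ≤ μ.real s :=
  calc 1 - (μ.real t + μ.real u) ≤ 1 - μ.real sᶜ := by
        gcongr; exact (measureReal_mono h).trans (measureReal_union_le t u)
    _ ≤ μ.real s := by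
        have := measureReal_union_le (μ := μ) s sᶜ
        rw [Set.union_compl_self, probReal_univ] at this
        linarith

theorem integrable_exp_neg_mul [IsFiniteMeasure μ] {X : Ω → ℝ} (hX : AEMeasurable X μ)
    (hX0 : 0 ≤ᵐ[μ] X) {M : ℝ} (hM : 0 ≤ M) : Integrable (fun ω ↦ exp (-(M * X ω))) μ := by
  refine (integrable_const (1 : ℝ)).mono' (by fun_prop) ?_
  filter_upwards [hX0] with ω hω
  rw [norm_of_nonneg (exp_nonneg _), exp_le_one_iff, neg_nonpos]
  exact mul_nonneg hM hω

theorem measureReal_le_le_exp_mul_integral_exp_neg [IsFiniteMeasure μ] {X : Ω → ℝ}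
    (hX : AEMeasurable X μ) (hX0 : 0 ≤ᵐ[μ] X) {M : ℝ} (hM : 0 ≤ M) (ε : ℝ) :
    μ.real {ω | X ω ≤ ε} ≤ exp (M * ε) * ∫ ω, exp (-(M * X ω)) ∂μ := by
  have h := measure_le_le_exp_mul_mgf ε (neg_nonpos.mpr hM)
    (by simpa only [neg_mul] using integrable_exp_neg_mul hX hX0 hM)
  simpa only [mgf, neg_neg, neg_mul] using h

theorem measureReal_le_le_inv_of_integral_eq_one {X : Ω → ℝ} (hX0 : 0 ≤ᵐ[μ] X)
    (hint : Integrable X μ) (hmean : ∫ ω, X ω ∂μ = 1) {a : ℝ} (ha : 0 < a) :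
    μ.real {ω | a ≤ X ω} ≤ a⁻¹ := by
  rw [← one_div, le_div_iff₀ ha, mul_comm, ← hmean]
  exact mul_meas_ge_le_integral_of_nonneg hX0 hint a

end

theorem scaling_factor_bounded_general
    {Ω : Type*} [MeasureSpace Ω] [IsProbabilityMeasure (volume : Measure Ω)]
    (Λ : Ω → ℝ) (hnonneg : ∀ ω, 0 ≤ Λ ω)
    (hint : Integrable Λ) (hmean : ∫ ω, Λ ω = 1)
    (g M : ℝ) (hg : 0 < g) (hM : 0 < M)
    (hlap : ∫ ω, exp (-(M * Λ ω)) ≤ exp (-(6 * g))) :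
    (1 - exp (-(5 * g))) / 2 ≤
      (volume {ω | g / M ≤ Λ ω ∧ Λ ω ≤ 2 / (1 - exp (-(5 * g)))}).toReal := by
  set c := exp (-(5 * g))
  have hc : c < 1 := exp_lt_one_iff.mpr (by linarith)
  have hΛ0 : 0 ≤ᵐ[volume] Λ := .of_forall hnonneg
  have hlow : volume.real {ω | Λ ω ≤ g / M} ≤ c :=
    calc volume.real {ω | Λ ω ≤ g / M}
        ≤ exp (M * (g / M)) * ∫ ω, exp (-(M * Λ ω)) :=
          measureReal_le_le_exp_mul_integral_exp_neg hint.aemeasurable hΛ0 hM.le _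
      _ ≤ exp g * exp (-(6 * g)) := by rw [mul_div_cancel₀ g hM.ne']; gcongr
      _ = c := by rw [← exp_add]; congr 1; ring
  have hhigh : volume.real {ω | 2 / (1 - c) ≤ Λ ω} ≤ (1 - c) / 2 := by
    simpa only [inv_div] using
      measureReal_le_le_inv_of_integral_eq_one hΛ0 hint hmean (by bound : 0 < 2 / (1 - c))
  have hcover : {ω | g / M ≤ Λ ω ∧ Λ ω ≤ 2 / (1 - c)}ᶜ ⊆
      {ω | Λ ω ≤ g / M} ∪ {ω | 2 / (1 - c) ≤ Λ ω} := by
    intro ω hω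
    simp only [Set.mem_compl_iff, Set.mem_ofPred_eq, not_and_or, not_le] at hω
    exact hω.imp le_of_lt le_of_lt
  rw [← measureReal_def]
  linarith [one_sub_le_measureReal_of_compl_subset_union (μ := volume) hcover]

/-- **Bounding the scaling factor.** Let `Λ ≥ 0` be a real
random variable with `E[Λ] = 1` and `E[e^{-MΛ}] ≤ e^{-6g}` (`g, M > 0`).
Then `P[g/M ≤ Λ ≤ 2/(1-e^{-5g})] ≥ (1-e^{-5g})/2`. -/
theorem scaling_factor_bounded
    {Ω : Type*} [MeasureSpace Ω] [IsProbabilityMeasure (volume : Measure Ω)]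
    (Λ : Ω → ℝ) (hmeas : Measurable Λ) (hnonneg : ∀ ω, 0 ≤ Λ ω)
    (hint : Integrable Λ) (hmean : ∫ ω, Λ ω = 1)
    (g M : ℝ) (hg : 0 < g) (hM : 0 < M)
    (hlap : ∫ ω, exp (-(M * Λ ω)) ≤ exp (-(6 * g))) :
    (1 - exp (-(5 * g))) / 2 ≤
      (volume {ω | g / M ≤ Λ ω ∧ Λ ω ≤ 2 / (1 - exp (-(5 * g)))}).toReal :=
  scaling_factor_bounded_general Λ hnonneg hint hmean g M hg hM hlap
end

section
/- Let 0 < f ≤ g < ∞ and M > 0, and let Λ be a nonnegative real random variable with E[Λ] = 1 and E[e^{−MΛ}] ≤ e^{−6g}. Let Υ be a nonempty finite set of pairs with associated values d(a,b) ∈ [2f, M], and define the random variable U_Υ(Λ) = |Υ|^{−1} Σ_{(a,b)∈Υ} e^{−Λ·d(a,b)}. Then P[ U̲ ≤ U_Υ(Λ) ≤ Ū ] ≥ χ, where U̲ = e^{−M·λ̄}, Ū = e^{−2f·λ̲}, λ̲ = g/M, λ̄ = 2/(1 − e^{−5g}), and χ = (1 − e^{−5g})/2. -/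
/-!
Every term `e^{-Λ d}` of the average, hence the average itself, lies between the two bounds as
soon as `g/M < Λ < λ̄`. The Chernoff bound with `E[e^{-MΛ}] ≤ e^{-6g}` gives
`P[Λ ≤ g/M] ≤ e^{g} e^{-6g} = e^{-5g}`, and Markov's inequality gives `P[Λ ≥ λ̄] ≤ 1/λ̄ = χ`,
so that event has probability at least `1 - e^{-5g} - χ = χ`.
-/

open Real MeasureTheory ProbabilityTheory

lemma Finset.inv_card_mul_sum_mem_Icc {K ι : Type*} [Field K] [LinearOrder K]
    [IsStrictOrderedRing K] {s : Finset ι} (hs : s.Nonempty) {x : ι → K} {a b : K}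
    (h : ∀ i ∈ s, x i ∈ Set.Icc a b) : (s.card : K)⁻¹ * ∑ i ∈ s, x i ∈ Set.Icc a b := by
  rw [inv_mul_eq_div, ← Finset.expect_eq_sum_div_card]
  exact ⟨Finset.le_expect hs fun i hi => (h i hi).1, Finset.expect_le hs fun i hi => (h i hi).2⟩

lemma Real.exp_neg_mul_mem_Icc {x y a b c e : ℝ} (hx : x ∈ Set.Icc a b) (hy : y ∈ Set.Icc c e)
    (ha : 0 ≤ a) (hc : 0 ≤ c) : exp (-(x * y)) ∈ Set.Icc (exp (-(e * b))) (exp (-(c * a))) := by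
  have hxy_le : x * y ≤ e * b := by
    rw [mul_comm e]; exact mul_le_mul hx.2 hy.2 (hc.trans hy.1) (ha.trans (hx.1.trans hx.2))
  have le_hxy : c * a ≤ x * y := by
    rw [mul_comm x]; exact mul_le_mul hy.1 hx.1 ha (hc.trans hy.1)
  exact ⟨exp_le_exp.2 (neg_le_neg hxy_le), exp_le_exp.2 (neg_le_neg le_hxy)⟩

section Tails

variable {Ω : Type*} [MeasurableSpace Ω] {μ : Measure Ω}

lemma integrable_exp_neg_mul_of_nonneg [IsFiniteMeasure μ] {X : Ω → ℝ}
    (hX : AEStronglyMeasurable X μ) (hX0 : 0 ≤ᵐ[μ] X) {t : ℝ} (ht : 0 ≤ t) :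
    Integrable (fun ω => exp (-(t * X ω))) μ := by
  refine Integrable.of_bound (continuous_exp.comp_aestronglyMeasurable
    (hX.const_mul t).neg) 1 ?_
  filter_upwards [hX0] with ω hω
  rw [norm_of_nonneg (exp_pos _).le, exp_le_one_iff, neg_nonpos]
  exact mul_nonneg ht hω

lemma measureReal_le_le_exp_mul_integral_exp_neg_mul [IsFiniteMeasure μ] {X : Ω → ℝ}
    (hX : AEStronglyMeasurable X μ) (hX0 : 0 ≤ᵐ[μ] X) {t : ℝ} (ht : 0 ≤ t) (ε : ℝ) :
    μ.real {ω | X ω ≤ ε} ≤ exp (t * ε) * ∫ ω, exp (-(t * X ω)) ∂μ := by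
  have h := measure_le_le_exp_mul_mgf (X := X) (μ := μ) ε (neg_nonpos.2 ht)
    (by simpa only [neg_mul] using integrable_exp_neg_mul_of_nonneg hX hX0 ht)
  simpa only [mgf, neg_neg, neg_mul] using h

lemma one_sub_sub_le_measureReal [IsProbabilityMeasure μ] {A B E : Set Ω}
    (h : (A ∪ B)ᶜ ⊆ E) : 1 - μ.real A - μ.real B ≤ μ.real E := by
  have hcover : Set.univ ⊆ A ∪ B ∪ E := fun ω _ => by
    by_cases hω : ω ∈ A ∪ B
    · exact Or.inl hω
    · exact Or.inr (h hω)
  have huniv := measureReal_mono (μ := μ) hcover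
  linarith [measureReal_union_le (μ := μ) (A ∪ B) E, measureReal_union_le (μ := μ) A B,
    probReal_univ (μ := μ)]

end Tails

theorem cluster_mean_value_bounded_general
    {Ω : Type*} [MeasureSpace Ω] [IsProbabilityMeasure (volume : Measure Ω)]
    (Λ : Ω → ℝ) (hnonneg : ∀ ω, 0 ≤ Λ ω)
    (hint : Integrable Λ) (hmean : ∫ ω, Λ ω = 1)
    (f g M : ℝ) (hf : 0 < f) (hfg : f ≤ g) (hM : 0 < M)
    (hlap : ∫ ω, exp (-(M * Λ ω)) ≤ exp (-(6 * g)))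
    {ι : Type*} (Υ : Finset ι) (hne : Υ.Nonempty) (d : ι → ℝ)
    (hd : ∀ i ∈ Υ, 2 * f ≤ d i ∧ d i ≤ M) :
    (1 - exp (-(5 * g))) / 2 ≤
      (volume {ω |
        exp (-(M * (2 / (1 - exp (-(5 * g)))))) ≤
            (Υ.card : ℝ)⁻¹ * ∑ i ∈ Υ, exp (-(Λ ω * d i)) ∧
        (Υ.card : ℝ)⁻¹ * ∑ i ∈ Υ, exp (-(Λ ω * d i)) ≤
            exp (-(2 * f * (g / M)))}).toReal := by
  have hg : 0 < g := hf.trans_le hfg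
  have hχ : 0 < 1 - exp (-(5 * g)) := sub_pos.2 (exp_lt_one_iff.2 (by linarith))
  set Λmax := 2 / (1 - exp (-(5 * g))) with hΛmax
  have hlow : volume.real {ω | Λ ω ≤ g / M} ≤ exp (-(5 * g)) := calc
    _ ≤ exp (M * (g / M)) * ∫ ω, exp (-(M * Λ ω)) :=
      measureReal_le_le_exp_mul_integral_exp_neg_mul hint.aestronglyMeasurable
        (ae_of_all _ hnonneg) hM.le _
    _ ≤ exp g * exp (-(6 * g)) := by rw [mul_div_cancel₀ _ hM.ne']; gcongr
    _ = exp (-(5 * g)) := by rw [← exp_add]; ring_nf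
  have hhigh : volume.real {ω | Λmax ≤ Λ ω} ≤ (1 - exp (-(5 * g))) / 2 := by
    have markov := mul_meas_ge_le_integral_of_nonneg (ae_of_all _ hnonneg) hint Λmax
    rw [hmean, hΛmax, div_mul_eq_mul_div, div_le_one hχ] at markov
    linarith
  have hgood : ({ω | Λ ω ≤ g / M} ∪ {ω | Λmax ≤ Λ ω})ᶜ ⊆ {ω |
      exp (-(M * Λmax)) ≤ (Υ.card : ℝ)⁻¹ * ∑ i ∈ Υ, exp (-(Λ ω * d i)) ∧
      (Υ.card : ℝ)⁻¹ * ∑ i ∈ Υ, exp (-(Λ ω * d i)) ≤ exp (-(2 * f * (g / M)))} := by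
    intro ω hω
    simp only [Set.compl_union, Set.mem_inter_iff, Set.mem_compl_iff, Set.mem_ofPred_eq,
      not_le] at hω
    have hΛ : Λ ω ∈ Set.Icc (g / M) Λmax := ⟨hω.1.le, hω.2.le⟩
    exact Finset.inv_card_mul_sum_mem_Icc hne fun i hi =>
      exp_neg_mul_mem_Icc hΛ (hd i hi) (by positivity) (by positivity)
  rw [← measureReal_def]
  linarith [one_sub_sub_le_measureReal (μ := volume) hgood]

/-- **Bounding the `U`-values.** Let `Λ ≥ 0` be a real random
variable with `E[Λ] = 1` and `E[e^{-MΛ}] ≤ e^{-6g}` where `0 < f ≤ g` and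
`M > 0`.  Let `Υ` be a nonempty finite set with values `d i ∈ [2f, M]` and let
`U_Υ(Λ) = |Υ|⁻¹ Σ_i e^{-Λ d i}`.  Then
`P[e^{-Mλ̄} ≤ U_Υ(Λ) ≤ e^{-2fλ̲}] ≥ χ` with `λ̲ = g/M`, `λ̄ = 2/(1-e^{-5g})`
and `χ = (1-e^{-5g})/2`. -/
theorem cluster_mean_value_bounded
    {Ω : Type*} [MeasureSpace Ω] [IsProbabilityMeasure (volume : Measure Ω)]
    (Λ : Ω → ℝ) (hmeas : Measurable Λ) (hnonneg : ∀ ω, 0 ≤ Λ ω)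
    (hint : Integrable Λ) (hmean : ∫ ω, Λ ω = 1)
    (f g M : ℝ) (hf : 0 < f) (hfg : f ≤ g) (hM : 0 < M)
    (hlap : ∫ ω, exp (-(M * Λ ω)) ≤ exp (-(6 * g)))
    {ι : Type*} (Υ : Finset ι) (hne : Υ.Nonempty) (d : ι → ℝ)
    (hd : ∀ i ∈ Υ, 2 * f ≤ d i ∧ d i ≤ M) :
    (1 - exp (-(5 * g))) / 2 ≤
      (volume {ω |
        exp (-(M * (2 / (1 - exp (-(5 * g)))))) ≤
            (Υ.card : ℝ)⁻¹ * ∑ i ∈ Υ, exp (-(Λ ω * d i)) ∧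
        (Υ.card : ℝ)⁻¹ * ∑ i ∈ Υ, exp (-(Λ ω * d i)) ≤
            exp (-(2 * f * (g / M)))}).toReal :=
  cluster_mean_value_bounded_general Λ hnonneg hint hmean f g M hf hfg hM hlap Υ hne d hd
end

section
/- Let X₁,…,X_k be i.i.d. real random variables, let u < v be reals, let N ≥ 1 be an integer, and partition [u,v) into N consecutive intervals I₁,…,I_N of equal length. Suppose P[X₁ ∈ [u,v)] ≥ χ for some χ ∈ (0,1]. Then, with probability at least 1 − 2·exp(−kχ²/(8N²)), there exists j ∈ {1,…,N} such that #{i ∈ {1,…,k} : X_i ∈ I_j} ≥ kχ/(2N). -/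
open scoped Classical
open Real MeasureTheory ProbabilityTheory

/-!
The indicators of `X i ∈ [u,v)` are independent with means at least `χ`, so by Hoeffding's
inequality at least `kχ/2` of the `X i` fall in `[u,v)`, except with probability
`exp (-kχ²/2) ≤ exp (-kχ²/(8N²))`. By pigeonhole, one of the `N` bins then receives at least
`kχ/(2N)` of them.
-/

open Finset

-- An `abbrev`, so that membership is decided by `Set.decidableMemIco`, as in the statement.
abbrev uniformBin (u v : ℝ) (N j : ℕ) : Set ℝ :=
  Set.Ico (u + j * ((v - u) / N)) (u + (j + 1) * ((v - u) / N))

lemma exists_mem_uniformBin {u v x : ℝ} {N : ℕ} (hN : N ≠ 0) (hx : x ∈ Set.Ico u v) :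
    ∃ j ∈ range N, x ∈ uniformBin u v N j := by
  have hN' : (0 : ℝ) < N := by positivity
  have hΔ : 0 < (v - u) / N := div_pos (by linarith [hx.1, hx.2]) hN'
  have hr : 0 ≤ (x - u) / ((v - u) / N) := div_nonneg (by linarith [hx.1]) hΔ.le
  refine ⟨⌊(x - u) / ((v - u) / N)⌋₊, ?_, ?_, ?_⟩
  · rw [mem_range, Nat.floor_lt hr, div_lt_iff₀ hΔ, mul_div_cancel₀ _ hN'.ne']
    linarith [hx.2]
  · have := mul_le_mul_of_nonneg_right (Nat.floor_le hr) hΔ.le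
    rw [div_mul_cancel₀ _ hΔ.ne'] at this
    linarith
  · have := mul_lt_mul_of_pos_right (Nat.lt_floor_add_one ((x - u) / ((v - u) / N))) hΔ
    rw [div_mul_cancel₀ _ hΔ.ne'] at this
    linarith

lemma exists_div_le_card_uniformBin {ι : Type*} (s : Finset ι) (x : ι → ℝ) (u v : ℝ)
    {N : ℕ} (hN : N ≠ 0) {c : ℝ} (hc : c ≤ #{i ∈ s | x i ∈ Set.Ico u v}) :
    ∃ j ∈ range N, c / N ≤ #{i ∈ s | x i ∈ uniformBin u v N j} := by
  apply exists_le_of_sum_le (nonempty_range_iff.mpr hN)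
  rw [sum_const, card_range, nsmul_eq_mul, mul_div_cancel₀ _ (by positivity)]
  have hcover : {i ∈ s | x i ∈ Set.Ico u v} ⊆
      (range N).biUnion fun j => {i ∈ s | x i ∈ uniformBin u v N j} := by
    intro i hi
    rw [mem_filter] at hi
    obtain ⟨j, hj, hij⟩ := exists_mem_uniformBin hN hi.2
    exact mem_biUnion.mpr ⟨j, hj, mem_filter.mpr ⟨hi.1, hij⟩⟩
  exact hc.trans (mod_cast (card_le_card hcover).trans card_biUnion_le)

lemma measureReal_card_le_sub_le_of_iIndepFun {Ω ι : Type*} [MeasurableSpace Ω] {μ : Measure Ω}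
    [IsProbabilityMeasure μ] [Fintype ι] {X : ι → Ω → ℝ} (hmeas : ∀ i, Measurable (X i))
    (hindep : iIndepFun X μ) {S : Set ℝ} [DecidablePred (· ∈ S)] (hS : MeasurableSet S)
    {p ε : ℝ} (hp : ∀ i, p ≤ μ.real (X i ⁻¹' S)) (hε : 0 ≤ ε) :
    μ.real {ω | (#{i | X i ω ∈ S} : ℝ) ≤ Fintype.card ι * p - ε} ≤
      exp (-2 * ε ^ 2 / Fintype.card ι) := by
  set Y : ι → Ω → ℝ := fun i ω => S.indicator 1 (X i ω)
  have hY_meas : ∀ i, Measurable (Y i) := fun i => (measurable_one.indicator hS).comp (hmeas i)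
  have hY_int : ∀ i, μ[Y i] = μ.real (X i ⁻¹' S) := fun i => by
    rw [← integral_indicator_one ((hmeas i) hS)]; rfl
  have hsubG : ∀ i, HasSubgaussianMGF (fun ω => μ.real (X i ⁻¹' S) - Y i ω) (1 / 4) μ := by
    intro i
    have hbound : ∀ᵐ ω ∂μ, Y i ω ∈ Set.Icc (0 : ℝ) 1 := ae_of_all _ fun ω => by
      by_cases h : X i ω ∈ S <;> simp [Y, h]
    convert (hasSubgaussianMGF_of_mem_Icc (hY_meas i).aemeasurable hbound).neg using 1
    · ext ω; simp [hY_int]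
    · ext; norm_num
  have hindepZ : iIndepFun (fun i ω => μ.real (X i ⁻¹' S) - Y i ω) μ :=
    hindep.comp (fun i x => μ.real (X i ⁻¹' S) - S.indicator 1 x)
      fun i => measurable_const.sub (measurable_one.indicator hS)
  have hcount : ∀ ω, ∑ i, Y i ω = #{i | X i ω ∈ S} := fun ω => by
    simp only [Y, Set.indicator_apply, Pi.one_apply, natCast_card_filter]
  calc μ.real {ω | (#{i | X i ω ∈ S} : ℝ) ≤ Fintype.card ι * p - ε}
      ≤ μ.real {ω | ε ≤ ∑ i, (μ.real (X i ⁻¹' S) - Y i ω)} := by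
        refine measureReal_mono (fun ω hω => ?_)
        have hmean : Fintype.card ι * p ≤ ∑ i, μ.real (X i ⁻¹' S) := by
          simpa using sum_le_sum fun i (_ : i ∈ univ) => hp i
        simp only [Set.mem_ofPred_eq, sum_sub_distrib, hcount] at hω ⊢
        linarith
    _ ≤ exp (-ε ^ 2 / (2 * ((∑ _i : ι, (1 / 4 : NNReal) : NNReal) : ℝ))) :=
        HasSubgaussianMGF.measure_sum_ge_le_of_iIndepFun hindepZ (fun i _ => hsubG i) hε
    _ = exp (-2 * ε ^ 2 / Fintype.card ι) := by
        congr 1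
        simp only [sum_const, card_univ, nsmul_eq_mul, NNReal.coe_mul, NNReal.coe_natCast,
          NNReal.coe_div, NNReal.coe_one, NNReal.coe_ofNat]
        ring

theorem abundant_bin_exists_general
    {Ω : Type*} [MeasureSpace Ω] [IsProbabilityMeasure (volume : Measure Ω)]
    (k : ℕ) (hk : 1 ≤ k) (X : Fin k → Ω → ℝ)
    (hmeas : ∀ i, Measurable (X i))
    (hindep : iIndepFun X volume)
    (hident : ∀ i j, IdentDistrib (X i) (X j) volume volume)
    (u v : ℝ) (N : ℕ) (hN : 1 ≤ N)
    (χ : ℝ) (hχ0 : 0 < χ)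
    (hmass : χ ≤ (volume {ω | X ⟨0, hk⟩ ω ∈ Set.Ico u v}).toReal) :
    1 - 2 * exp (-((k : ℝ) * χ ^ 2 / (8 * (N : ℝ) ^ 2))) ≤
      (volume {ω | ∃ j ∈ Finset.range N,
        (k : ℝ) * χ / (2 * N) ≤
          ((Finset.univ.filter (fun i : Fin k =>
            X i ω ∈ Set.Ico (u + j * ((v - u) / N))
              (u + (j + 1) * ((v - u) / N)))).card : ℝ)}).toReal := by
  set μ : Measure Ω := volume
  set E : Set Ω :=
    {ω | ∃ j ∈ range N, (k : ℝ) * χ / (2 * N) ≤ #{i | X i ω ∈ uniformBin u v N j}}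
  have hp : ∀ i, χ ≤ μ.real (X i ⁻¹' Set.Ico u v) := fun i => by
    rwa [measureReal_def, (hident i ⟨0, hk⟩).measure_mem_eq measurableSet_Ico]
  have htail := measureReal_card_le_sub_le_of_iIndepFun hmeas hindep measurableSet_Ico hp
    (ε := k * χ / 2) (by positivity)
  rw [Fintype.card_fin] at htail
  have hcompl : Eᶜ ⊆ {ω | (#{i | X i ω ∈ Set.Ico u v} : ℝ) ≤ k * χ - k * χ / 2} := by
    intro ω hω
    by_contra hlt
    obtain ⟨j, hj, hle⟩ := exists_div_le_card_uniformBin univ (X · ω) u v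
      (N := N) (c := k * χ / 2) (by omega) (by rw [Set.mem_ofPred_eq] at hlt; linarith)
    exact hω ⟨j, hj, by rwa [div_div] at hle⟩
  have hexp : -2 * (k * χ / 2) ^ 2 / k ≤ -((k : ℝ) * χ ^ 2 / (8 * (N : ℝ) ^ 2)) := by
    have hk' : (0 : ℝ) < k := by positivity
    have hN' : (1 : ℝ) ≤ N := by exact_mod_cast hN
    rw [show -2 * ((k : ℝ) * χ / 2) ^ 2 / k = -(k * χ ^ 2 / 2) by field_simp, neg_le_neg_iff]
    gcongr
    nlinarith
  have hEc : μ.real Eᶜ ≤ exp (-((k : ℝ) * χ ^ 2 / (8 * (N : ℝ) ^ 2))) :=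
    ((measureReal_mono hcompl (measure_ne_top μ _)).trans htail).trans (exp_le_exp.mpr hexp)
  have hcover : 1 ≤ μ.real E + μ.real Eᶜ := by
    simpa [Set.union_compl_self] using measureReal_union_le (μ := μ) E Eᶜ
  show _ ≤ μ.real E
  linarith [exp_pos (-((k : ℝ) * χ ^ 2 / (8 * (N : ℝ) ^ 2)))]

/-- **Abundant bin.** Let `X₁,…,X_k` be i.i.d. real random
variables and partition `[u,v)` into `N` consecutive equal-length intervals.
If `P[X₁ ∈ [u,v)] ≥ χ`, then with probability at least
`1 - 2 exp(-kχ²/(8N²))` some interval contains at least `kχ/(2N)` of the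
`X_i`'s. -/
theorem abundant_bin_exists
    {Ω : Type*} [MeasureSpace Ω] [IsProbabilityMeasure (volume : Measure Ω)]
    (k : ℕ) (hk : 1 ≤ k) (X : Fin k → Ω → ℝ)
    (hmeas : ∀ i, Measurable (X i))
    (hindep : iIndepFun X volume)
    (hident : ∀ i j, IdentDistrib (X i) (X j) volume volume)
    (u v : ℝ) (huv : u < v) (N : ℕ) (hN : 1 ≤ N)
    (χ : ℝ) (hχ0 : 0 < χ) (hχ1 : χ ≤ 1)
    (hmass : χ ≤ (volume {ω | X ⟨0, hk⟩ ω ∈ Set.Ico u v}).toReal) :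
    1 - 2 * exp (-((k : ℝ) * χ ^ 2 / (8 * (N : ℝ) ^ 2))) ≤
      (volume {ω | ∃ j ∈ Finset.range N,
        (k : ℝ) * χ / (2 * N) ≤
          ((Finset.univ.filter (fun i : Fin k =>
            X i ω ∈ Set.Ico (u + j * ((v - u) / N))
              (u + (j + 1) * ((v - u) / N)))).card : ℝ)}).toReal :=
  abundant_bin_exists_general k hk X hmeas hindep hident u v N hN χ hχ0 hmass
end

section
/- Fix 0 < f ≤ g < ∞ and M > 0. There exist constants γ_q > 0, γ_Λ > 0 and n₁ ≥ 2 (all depending only on f, g, M) such that the following holds for every n ≥ n₁. Let T ∈ T_{f,g} be a phylogeny with n leaves and tree metric d, let λ* ∈ [fg/M², 2M/(f(1 − e^{−5g}))], and let q̂ be a symmetric real-valued function on pairs of distinct leaves satisfying, for all distinct leaves a, b: |q̂(a,b) − e^{−λ*·d(a,b)}| ≤ n^{−γ_q} + e^{−λ*·d(a,b)}·(e^{γ_Λ·d(a,b)/log n} − 1). Define d̂(a,b) = −ln(q̂(a,b)) if q̂(a,b) > 0 and d̂(a,b) = +∞ otherwise. Then d̂ is a (λ*f/5, 5λ*g·log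 n)-distorted metric for the scaled tree metric λ*·d on the leaves of T. -/
open scoped Classical
open Real MeasureTheory

noncomputable section

namespace RAS

variable {V : Type}

/-- A phylogeny on `n` labelled leaves: a finite binary tree whose internal
vertices have degree `3`, with positive edge weights. -/
structure Phylo (n : ℕ) where
  V : Type
  fV : Fintype V
  dV : DecidableEq V
  G : SimpleGraph V
  tree : G.IsTree
  leaf : Fin n → V
  leaf_inj : Function.Injective leaf
  leaf_deg : ∀ i, (G.neighborSet (leaf i)).ncard = 1
  internal_deg : ∀ v, v ∉ Set.range leaf → (G.neighborSet v).ncard = 3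
  w : Sym2 V → ℝ
  w_pos : ∀ e ∈ G.edgeSet, 0 < w e

attribute [instance] Phylo.fV Phylo.dV

/-- The tree metric between two leaves of a phylogeny. -/
def Phylo.dist {n : ℕ} (P : Phylo n) (i j : Fin n) : ℝ :=
  tdist P.G P.tree P.w (P.leaf i) (P.leaf j)

/-- `T ∈ 𝒯_{f,g}` : all edge weights lie in `[f,g]`. -/
def Phylo.Regular {n : ℕ} (P : Phylo n) (f g : ℝ) : Prop :=
  ∀ e ∈ P.G.edgeSet, f ≤ P.w e ∧ P.w e ≤ g

/-- One-sided Laplace transform `Φ(s) = E[exp(-sΛ)]` of a scaling random variable. -/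
def laplace {Ω : Type} [MeasureSpace Ω] (Λ : Ω → ℝ) (s : ℝ) : ℝ :=
  ∫ ω, exp (-(s * Λ ω))

/-- Distribution at the leaves of a single site of the generalized Poisson
model `(T,Λ)`: the pmf of the leaf restriction of `σ ~ D[Λ T, r]`, averaged over `Λ`. -/
def leafDist {n : ℕ} (P : Phylo n) {Ω : Type} [MeasureSpace Ω] (Λ : Ω → ℝ)
    (r : ℕ) (s : Fin n → Fin r) : ℝ :=
  ∫ ω, ∑ σ ∈ Finset.univ.filter (fun σ : P.V → Fin r => ∀ i, σ (P.leaf i) = s i),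
      poissonPMF P.G (fun e => Λ ω * P.w e) r σ

/-- Assumption A(f,g,M): regular phylogeny and `Φ(M) ≤ exp(-6g)`. -/
def AssumpA {n : ℕ} (f g M : ℝ) (P : Phylo n) {Ω : Type} [MeasureSpace Ω]
    (Λ : Ω → ℝ) : Prop :=
  P.Regular f g ∧ laplace Λ M ≤ exp (-(6 * g))

/-- Equality of leaf-labelled topologies: a leaf-label preserving graph isomorphism. -/
def TopoEq {n : ℕ} (P P' : Phylo n) : Prop :=
  ∃ φ : P.V ≃ P'.V, (∀ u v, P.G.Adj u v ↔ P'.G.Adj (φ u) (φ v)) ∧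
    ∀ i, φ (P.leaf i) = P'.leaf i

end RAS

namespace RAS

/-- A `(τ,Ψ)`-distorted metric for the (finite-valued) leaf metric `D`:
`D̂` is symmetric with values in `ℝ ∪ {+∞}`, and whenever either `D(u,v)` or
`D̂(u,v)` is smaller than `Ψ + τ` (for distinct leaves `u,v`), `D̂(u,v)` is a
real number within `τ` of `D(u,v)`. -/
def IsDistortedMetric {n : ℕ} (D : Fin n → Fin n → ℝ)
    (Dh : Fin n → Fin n → EReal) (τ Ψ : ℝ) : Prop :=
  (∀ u v, Dh u v = Dh v u) ∧
  ∀ u v, u ≠ v → (D u v < Ψ + τ ∨ Dh u v < ((Ψ + τ : ℝ) : EReal)) →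
    ∃ x : ℝ, Dh u v = (x : EReal) ∧ |D u v - x| < τ

/-- The estimated distance `d̂(a,b) = -ln q̂(a,b)` if `q̂(a,b) > 0`, and `+∞`
otherwise. -/
def dhat {n : ℕ} (q : Fin n → Fin n → ℝ) (a b : Fin n) : EReal :=
  if 0 < q a b then ((-Real.log (q a b) : ℝ) : EReal) else ⊤

end RAS

/-!
Write `x = λ*·d(a,b)` and `L = log n`. The additive error `n^{-γq}` is at most `e^{-x}/n` as long
as `x ≤ (γq - 1)·L`, and the multiplicative error `e^{γΛ d/L} - 1` is uniformly small when
`x = O(L)`. So in a range `x ≤ R·L` the estimate `q̂` has small relative error, which becomes a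
small additive error for `d̂ = -log q̂`. Taking `R` larger than twice the largest possible value
of `(Ψ + τ)/L`, beyond `R·L` both error terms are at most `e^{-(Ψ+τ)}/n`, so `q̂ < e^{-(Ψ+τ)}` and
`d̂ > Ψ + τ`: such pairs are not constrained by the distortion condition.
-/

namespace RAS

theorem Phylo.dist_nonneg {n : ℕ} (P : Phylo n) (i j : Fin n) : 0 ≤ P.dist i j :=
  List.sum_nonneg fun _ hx => by
    obtain ⟨e, he, rfl⟩ := List.mem_map.1 hx
    exact (P.w_pos e (SimpleGraph.Walk.edges_subset_edgeSet _ he)).le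

theorem dhat_eq_of_pos {n : ℕ} {q : Fin n → Fin n → ℝ} {a b : Fin n} (h : 0 < q a b) :
    dhat q a b = ((-log (q a b) : ℝ) : EReal) :=
  if_pos h

theorem le_dhat_of_lt_exp {n : ℕ} {q : Fin n → Fin n → ℝ} {a b : Fin n} {c : ℝ}
    (h : q a b < exp (-c)) : (c : EReal) ≤ dhat q a b := by
  unfold dhat
  split_ifs with hq
  · exact EReal.coe_le_coe_iff.2 (le_neg.2 ((log_le_iff_le_exp hq).2 h.le))
  · exact le_top

theorem isDistortedMetric_dhat {n : ℕ} {D : Fin n → Fin n → ℝ} {q : Fin n → Fin n → ℝ}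
    {τ Ψ : ℝ} (hq : ∀ a b, q a b = q b a)
    (h : ∀ u v, u ≠ v → (0 < q u v ∧ |D u v + log (q u v)| < τ) ∨
      (Ψ + τ ≤ D u v ∧ q u v < exp (-(Ψ + τ)))) :
    IsDistortedMetric D (dhat q) τ Ψ := by
  refine ⟨fun u v => by simp only [dhat, hq u v], fun u v huv hlt => ?_⟩
  rcases h u v huv with ⟨hpos, hclose⟩ | ⟨hD, hsmall⟩
  · exact ⟨-log (q u v), dhat_eq_of_pos hpos, by rwa [sub_neg_eq_add]⟩
  · rcases hlt with hlt | hlt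
    · exact absurd hD hlt.not_ge
    · exact absurd (le_dhat_of_lt_exp hsmall) hlt.not_ge

end RAS

theorem abs_add_log_lt_of_abs_sub_exp_lt {x Q τ : ℝ}
    (h : |Q - exp (-x)| < exp (-x) * (1 - exp (-τ))) : 0 < Q ∧ |x + log Q| < τ := by
  obtain ⟨hlo, hhi⟩ := abs_lt.1 h
  have hE := exp_pos (-x)
  have hQlo : exp (-x) * exp (-τ) < Q := by linarith
  -- `e^τ + e^{-τ} ≥ 2` turns the upper bound `e^{-x}(2 - e^{-τ})` into `e^{-x} e^τ`
  have hQhi : Q < exp (-x) * exp τ := by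
    nlinarith [add_one_le_exp τ, add_one_le_exp (-τ)]
  have hQ : 0 < Q := (mul_pos hE (exp_pos _)).trans hQlo
  refine ⟨hQ, abs_lt.2 ⟨?_, ?_⟩⟩
  · have := (lt_log_iff_exp_lt hQ).2 (by rwa [← exp_add] at hQlo)
    linarith
  · have := (log_lt_iff_lt_exp hQ).2 (by rwa [← exp_add] at hQhi)
    linarith

theorem exp_neg_add_one_mul_log {n : ℝ} (hn : 0 < n) (c : ℝ) :
    exp (-((c + 1) * log n)) = exp (-(c * log n)) / n := by
  rw [show -((c + 1) * log n) = -(c * log n) + -log n by ring, exp_add, exp_neg (log n),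
    exp_log hn, div_eq_mul_inv]

theorem rpow_neg_le_exp_div {n c γ : ℝ} (hn : 1 ≤ n) (hγ : c + 1 ≤ γ) :
    n ^ (-γ) ≤ exp (-(c * log n)) / n := by
  have hn0 : 0 < n := one_pos.trans_le hn
  calc n ^ (-γ) ≤ n ^ (-(c + 1)) := rpow_le_rpow_of_exponent_le hn (neg_le_neg hγ)
    _ = exp (-(c * log n)) / n := by
      rw [rpow_def_of_pos hn0, mul_neg, mul_comm, exp_neg_add_one_mul_log hn0]

section AccuracyBound

variable {n lam d Q γq γΛ : ℝ}

theorem abs_add_log_lt_of_le_mul_log {τ ε R : ℝ} (hL : 0 < log n) (hd : 0 ≤ d) (hR : 0 < R)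
    (hε : 0 < ε) (hετ : ε ≤ 1 - exp (-τ)) (hnε : 4 / ε ≤ n) (hγq : R + 1 ≤ γq)
    (hγΛ : γΛ * R ≤ lam * log (1 + ε / 4)) (hnear : lam * d ≤ R * log n)
    (hacc : |Q - exp (-(lam * d))| ≤
      n ^ (-γq) + exp (-(lam * d)) * (exp (γΛ * d / log n) - 1)) :
    0 < Q ∧ |lam * d + log Q| < τ := by
  apply abs_add_log_lt_of_abs_sub_exp_lt
  have hn : 1 < n := (log_pos_iff ((div_pos four_pos hε).le.trans hnε)).1 hL
  have hE := exp_pos (-(lam * d))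
  have hadd : n ^ (-γq) ≤ exp (-(lam * d)) * (ε / 4) :=
    calc n ^ (-γq) ≤ exp (-(R * log n)) / n := rpow_neg_le_exp_div hn.le hγq
      _ ≤ exp (-(lam * d)) * n⁻¹ := by
        rw [div_eq_mul_inv]; gcongr
      _ ≤ exp (-(lam * d)) * (ε / 4) := by
        gcongr; simpa only [inv_div] using inv_anti₀ (by positivity) hnε
  have hmul : exp (γΛ * d / log n) - 1 ≤ ε / 4 := by
    have hlog : 0 ≤ log (1 + ε / 4) := log_nonneg (by linarith)
    have : γΛ * d / log n ≤ log (1 + ε / 4) := by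
      rw [div_le_iff₀ hL]
      refine le_of_mul_le_mul_right ?_ hR
      nlinarith [mul_le_mul_of_nonneg_right hγΛ hd, mul_le_mul_of_nonneg_left hnear hlog]
    have := exp_le_exp.2 this
    rw [exp_log (by linarith)] at this
    linarith
  calc |Q - exp (-(lam * d))|
      ≤ exp (-(lam * d)) * (ε / 4) + exp (-(lam * d)) * (ε / 4) :=
        hacc.trans (add_le_add hadd (mul_le_mul_of_nonneg_left hmul hE.le))
    _ < exp (-(lam * d)) * ε := by nlinarith
    _ ≤ exp (-(lam * d)) * (1 - exp (-τ)) := by gcongr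

theorem lt_exp_of_mul_log_lt {B : ℝ} (hn : 2 ≤ n) (hL : 1 ≤ log n) (hd : 0 ≤ d)
    (hγΛ0 : 0 ≤ γΛ) (hγΛ : 2 * γΛ ≤ lam) (hγq : B + 1 ≤ γq)
    (hfar : 2 * (B + 1) * log n < lam * d)
    (hacc : |Q - exp (-(lam * d))| ≤
      n ^ (-γq) + exp (-(lam * d)) * (exp (γΛ * d / log n) - 1)) :
    Q < exp (-(B * log n)) := by
  have hn0 : 0 < n := by linarith
  have hs : γΛ * d / log n ≤ lam * d / 2 :=
    (div_le_self (mul_nonneg hγΛ0 hd) hL).trans (by nlinarith)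
  have hQ : Q ≤ n ^ (-γq) + exp (γΛ * d / log n + -(lam * d)) := by
    have := (abs_le.1 hacc).2
    rw [exp_add]
    linarith
  have hrel : exp (γΛ * d / log n + -(lam * d)) < exp (-(B * log n)) / n := by
    rw [← exp_neg_add_one_mul_log hn0]
    exact exp_lt_exp.2 (by linarith)
  calc Q < exp (-(B * log n)) / n + exp (-(B * log n)) / n :=
        hQ.trans_lt (add_lt_add_of_le_of_lt (rpow_neg_le_exp_div (by linarith) hγq) hrel)
    _ = exp (-(B * log n)) * (2 / n) := by ring
    _ ≤ exp (-(B * log n)) := mul_le_of_le_one_right (exp_pos _).le ((div_le_one hn0).2 hn)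

end AccuracyBound

theorem exists_exponents_isDistortedMetric_dhat {lam0 lam1 a b : ℝ} (hlam0 : 0 < lam0)
    (hlam1 : 0 < lam1) (ha : 0 < a) (hb : 0 ≤ b) :
    ∃ γq : ℝ, 0 < γq ∧ ∃ γΛ : ℝ, 0 < γΛ ∧ ∃ n₁ : ℕ, 2 ≤ n₁ ∧
      ∀ n : ℕ, n₁ ≤ n → ∀ d : Fin n → Fin n → ℝ, (∀ i j, 0 ≤ d i j) →
        ∀ lam : ℝ, lam0 ≤ lam → lam ≤ lam1 →
          ∀ q : Fin n → Fin n → ℝ, (∀ i j, q i j = q j i) →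
            (∀ i j : Fin n, i ≠ j →
              |q i j - exp (-(lam * d i j))| ≤
                (n : ℝ) ^ (-γq) + exp (-(lam * d i j)) * (exp (γΛ * d i j / log n) - 1)) →
            RAS.IsDistortedMetric (fun i j => lam * d i j) (RAS.dhat q) (lam * a)
              (lam * b * log n) := by
  set B := lam1 * (b + a)
  set R := 2 * (B + 1)
  set δ := 1 - exp (-(lam0 * a))
  have hR : 0 < R := by positivity
  have hδ : 0 < δ := sub_pos.2 (exp_lt_one_iff.2 (neg_lt_zero.2 (by positivity)))
  have hlogδ : 0 < log (1 + δ / 4) := log_pos (by linarith)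
  set γΛ := lam0 * min (1 / 2) (log (1 + δ / 4) / R) with hγΛ_def
  have hγΛ : 0 < γΛ := by positivity
  refine ⟨R + 1, by positivity, γΛ, hγΛ, max 3 ⌈4 / δ⌉₊, le_max_of_le_left (by norm_num), ?_⟩
  intro n hn d hd lam hlo hhi q hq hacc
  have hn3 : (3 : ℝ) ≤ n := by exact_mod_cast (le_max_left _ _).trans hn
  have hnδ : 4 / δ ≤ n := (Nat.le_ceil _).trans (by exact_mod_cast (le_max_right _ _).trans hn)
  have hL : 1 ≤ log n := (le_log_iff_exp_le (by linarith)).2 (by linarith [exp_one_lt_d9])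
  have hΨ : lam * b * log n + lam * a ≤ B * log n := by
    show _ ≤ lam1 * (b + a) * log n
    nlinarith [mul_nonneg (mul_nonneg (hlam0.trans_le hlo).le ha.le) (sub_nonneg.2 hL),
      mul_nonneg (mul_nonneg (sub_nonneg.2 hhi) (by positivity : 0 ≤ b + a)) (zero_le_one.trans hL)]
  have hγΛR : γΛ * R ≤ lam * log (1 + δ / 4) :=
    calc γΛ * R ≤ lam0 * (log (1 + δ / 4) / R) * R := by
          rw [hγΛ_def]; gcongr; exact min_le_right _ _
      _ = lam0 * log (1 + δ / 4) := by field_simp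
      _ ≤ lam * log (1 + δ / 4) := by gcongr
  have hγΛlam : 2 * γΛ ≤ lam :=
    calc 2 * γΛ ≤ 2 * (lam0 * (1 / 2)) := by rw [hγΛ_def]; gcongr; exact min_le_left _ _
      _ ≤ lam := by linarith
  refine RAS.isDistortedMetric_dhat hq fun u v huv => ?_
  by_cases hnear : lam * d u v ≤ R * log n
  · refine Or.inl (abs_add_log_lt_of_le_mul_log (by linarith) (hd u v) hR hδ ?_ hnδ le_rfl hγΛR
      hnear (hacc u v huv))
    show 1 - exp (-(lam0 * a)) ≤ _
    gcongr
  · have hfar := lt_exp_of_mul_log_lt (by linarith) hL (hd u v) hγΛ.le hγΛlam (by linarith)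
      (not_le.1 hnear) (hacc u v huv)
    exact Or.inr ⟨by nlinarith, hfar.trans_le (exp_le_exp.2 (by linarith))⟩

/-- **Distortion estimation.** Fix `0 < f ≤ g` and `M > 0`.
There are `γ_q, γ_Λ > 0` and `n₁ ≥ 2` (depending only on `f,g,M`) such that
for every `n ≥ n₁`, every phylogeny `T ∈ 𝒯_{f,g}` on `n` leaves, every
`λ* ∈ [fg/M², 2M/(f(1-e^{-5g}))]` and every symmetric `q̂` satisfying the
stated accuracy bound, the map `d̂ = -ln q̂` (with `+∞` for nonpositive `q̂`)
is a `(λ*f/5, 5λ*g log n)`-distorted metric for `λ*·d`. -/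
theorem distortion_estimation (f g M : ℝ) (hf : 0 < f) (hfg : f ≤ g) (hM : 0 < M) :
    ∃ γq : ℝ, 0 < γq ∧ ∃ γΛ : ℝ, 0 < γΛ ∧ ∃ n₁ : ℕ, 2 ≤ n₁ ∧
      ∀ n : ℕ, n₁ ≤ n → ∀ P : RAS.Phylo n, P.Regular f g →
        ∀ lam : ℝ, f * g / M ^ 2 ≤ lam → lam ≤ 2 * M / (f * (1 - Real.exp (-(5 * g)))) →
          ∀ q : Fin n → Fin n → ℝ, (∀ a b, q a b = q b a) →
            (∀ a b : Fin n, a ≠ b →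
              |q a b - Real.exp (-(lam * P.dist a b))| ≤
                (n : ℝ) ^ (-γq) + Real.exp (-(lam * P.dist a b)) *
                  (Real.exp (γΛ * P.dist a b / Real.log n) - 1)) →
            RAS.IsDistortedMetric (fun a b => lam * P.dist a b) (RAS.dhat q)
              (lam * f / 5) (5 * lam * g * Real.log n) := by
  have hg : 0 < g := hf.trans_le hfg
  have hlam1 : 0 < 2 * M / (f * (1 - exp (-(5 * g)))) :=
    div_pos (by positivity) (mul_pos hf (sub_pos.2 (exp_lt_one_iff.2 (by linarith))))
  obtain ⟨γq, hγq, γΛ, hγΛ, n₁, hn₁, h⟩ :=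
    exists_exponents_isDistortedMetric_dhat (by positivity : 0 < f * g / M ^ 2) hlam1
      (by positivity : 0 < f / 5) (by positivity : 0 ≤ 5 * g)
  refine ⟨γq, hγq, γΛ, hγΛ, n₁, hn₁, fun n hn P _ lam hlo hhi q hq hacc => ?_⟩
  convert h n hn P.dist P.dist_nonneg lam hlo hhi q hq hacc using 2 <;> ring
end
end
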